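/- Let n ≥ 2 and let ψ : ℕ → (0,∞) satisfy ψ(k) → 0 as k → ∞. If the sum ∑_{k=1}^∞ k^{n-2} ψ(k) converges, then the set V(ℝ^n; ψ) = {x ∈ ℝ^n : |q·x| < ψ(|q|) for infinitely many q ∈ ℤ^n \ {0}} has n-dimensional Lebesgue measure zero. -/

import Mathlib

/-!
On a fixed unit cube, the slab `|q · x| < c` has volume at most `2c / |q|`: shear the
coordinate `i` with `|q i| = |q|` into `q · x`. There are at most `2n (2k + 1)^(n-1)` integer
vectors of height `k`, so the volumes of the slabs `|q · x| < ψ(|q|)` inside the cube add up to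
at most a constant times `∑ k^(n-2) ψ(k) < ∞`, and Borel–Cantelli applies on each cube.
-/

open MeasureTheory

/-- Sup norm (height) of an integer vector. -/
def qnorm {n : ℕ} (q : Fin n → ℤ) : ℕ := Finset.univ.sup fun i => (q i).natAbs

open Set
open scoped ENNReal

theorem Matrix.det_updateRow_one {ι R : Type*} [Fintype ι] [DecidableEq ι] [CommRing R]
    (i : ι) (v : ι → R) : (Matrix.updateRow 1 i v).det = v i := by
  simpa using (Matrix.cramer_transpose_apply (1 : Matrix ι ι R) v i).symm

section qnorm

variable {n : ℕ}

theorem natAbs_le_qnorm (q : Fin n → ℤ) (i : Fin n) : (q i).natAbs ≤ qnorm q :=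
  Finset.le_sup (f := fun i => (q i).natAbs) (Finset.mem_univ i)

theorem exists_natAbs_eq_qnorm [Nonempty (Fin n)] (q : Fin n → ℤ) :
    ∃ i, (q i).natAbs = qnorm q := by
  obtain ⟨i, -, hi⟩ := Finset.exists_mem_eq_sup Finset.univ Finset.univ_nonempty
    fun i => (q i).natAbs
  exact ⟨i, hi.symm⟩

theorem qnorm_eq_zero_iff {q : Fin n → ℤ} : qnorm q = 0 ↔ q = 0 := by
  refine ⟨fun h => funext fun i => ?_, by rintro rfl; simp [qnorm]⟩
  exact Int.natAbs_eq_zero.1 (Nat.le_zero.1 (h ▸ natAbs_le_qnorm q i))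

noncomputable def qnormSphere (n k : ℕ) : Finset (Fin n → ℤ) :=
  {q ∈ Fintype.piFinset fun _ => Finset.Icc (-(k : ℤ)) k | qnorm q = k}

theorem mem_qnormSphere {k : ℕ} {q : Fin n → ℤ} : q ∈ qnormSphere n k ↔ qnorm q = k := by
  refine ⟨fun h => (Finset.mem_filter.1 h).2, fun h => Finset.mem_filter.2 ⟨?_, h⟩⟩
  refine Fintype.mem_piFinset.2 fun i => Finset.mem_Icc.2 ?_
  have := natAbs_le_qnorm q i
  omega

theorem qnormSphere_subset_biUnion {k : ℕ} (hk : k ≠ 0) :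
    qnormSphere n k ⊆ Finset.univ.biUnion fun i => Fintype.piFinset
      (Function.update (fun _ => Finset.Icc (-(k : ℤ)) k) i {(k : ℤ), -(k : ℤ)}) := by
  intro q hq
  have hqk := mem_qnormSphere.1 hq
  obtain ⟨j, -⟩ := Function.ne_iff.1 fun h => hk (hqk ▸ qnorm_eq_zero_iff.2 h)
  have : Nonempty (Fin n) := ⟨j⟩
  obtain ⟨i, hi⟩ := exists_natAbs_eq_qnorm q
  refine Finset.mem_biUnion.2 ⟨i, Finset.mem_univ i, Fintype.mem_piFinset.2 fun j => ?_⟩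
  rcases eq_or_ne j i with rfl | hj
  · rw [Function.update_self]
    rcases Int.natAbs_eq_iff.1 (hi.trans hqk) with h | h <;> simp [h]
  · rw [Function.update_of_ne hj]
    exact (Fintype.mem_piFinset.1 (Finset.mem_filter.1 hq).1) j

theorem card_qnormSphere_le {k : ℕ} (hk : k ≠ 0) :
    (qnormSphere n k).card ≤ 2 * n * (2 * k + 1) ^ (n - 1) := by
  refine (Finset.card_le_card (qnormSphere_subset_biUnion hk)).trans
    (Finset.card_biUnion_le.trans ?_)
  have hface : ∀ i : Fin n, (Fintype.piFinset (Function.update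
      (fun _ => Finset.Icc (-(k : ℤ)) k) i {(k : ℤ), -(k : ℤ)})).card ≤
      2 * (2 * k + 1) ^ (n - 1) := by
    intro i
    rw [Fintype.card_piFinset]
    simp only [Function.apply_update (fun _ t => Finset.card t),
      Finset.prod_update_of_mem (Finset.mem_univ i)]
    rw [Finset.prod_const, Int.card_Icc, Finset.card_sdiff_of_subset (by simp)]
    simp only [Finset.card_univ, Fintype.card_fin, Finset.card_singleton]
    gcongr
    · exact Finset.card_le_two
    · omega
  calc _ ≤ ∑ _i : Fin n, 2 * (2 * k + 1) ^ (n - 1) := Finset.sum_le_sum fun i _ => hface i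
    _ = _ := by simp; ring

end qnorm

theorem tsum_comp_qnorm (n : ℕ) (f : ℕ → ℝ≥0∞) :
    ∑' q : Fin n → ℤ, f (qnorm q) = ∑' k, (qnormSphere n k).card * f k := by
  classical
  calc ∑' q : Fin n → ℤ, f (qnorm q)
      = ∑' q : Fin n → ℤ, ∑' k, if k = qnorm q then f k else 0 :=
        tsum_congr fun q => (tsum_ite_eq (qnorm q) f).symm
    _ = ∑' k, ∑' q : Fin n → ℤ, if k = qnorm q then f k else 0 := ENNReal.tsum_comm
    _ = ∑' k, (qnormSphere n k).card * f k := by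
        refine tsum_congr fun k => ?_
        rw [tsum_eq_sum (s := qnormSphere n k) fun q hq =>
            if_neg fun h => hq (mem_qnormSphere.2 h.symm),
          Finset.sum_congr rfl fun q hq => if_pos (mem_qnormSphere.1 hq).symm]
        simp

theorem volume_slab_inter_unitCube_le {n : ℕ} {q : Fin n → ℤ} (hq : q ≠ 0) (c : ℝ)
    (a : Fin n → ℝ) :
    volume ({x : Fin n → ℝ | |∑ i, (q i : ℝ) * x i| < c} ∩ pi univ fun i => Ico (a i) (a i + 1))
      ≤ ENNReal.ofReal (2 * c / qnorm q) := by
  obtain ⟨j, -⟩ := Function.ne_iff.1 hq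
  have : Nonempty (Fin n) := ⟨j⟩
  obtain ⟨i₀, hi₀⟩ := exists_natAbs_eq_qnorm q
  classical
  -- `T` replaces the coordinate `x i₀` by `q · x`: it has determinant `q i₀`, and maps the
  -- slab inside the cube into a box of volume `2c`.
  set T := Matrix.toLin' (Matrix.updateRow 1 i₀ fun j => (q j : ℝ))
  have hdet : LinearMap.det T = q i₀ := by
    rw [LinearMap.det_toLin', Matrix.det_updateRow_one]
  have habs : |(q i₀ : ℝ)| = qnorm q := by
    rw [← hi₀, Nat.cast_natAbs, Int.cast_abs]
  have hqi₀ : (q i₀ : ℝ) ≠ 0 := by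
    rw [← abs_ne_zero, habs, Nat.cast_ne_zero]
    exact mt qnorm_eq_zero_iff.1 hq
  set B : Set (Fin n → ℝ) :=
    pi univ fun i => if i = i₀ then Ioo (-c) c else Ico (a i) (a i + 1)
  have hsub : {x : Fin n → ℝ | |∑ i, (q i : ℝ) * x i| < c} ∩
      (pi univ fun i => Ico (a i) (a i + 1)) ⊆ T ⁻¹' B := by
    rintro x ⟨hx, hxa⟩ i -
    rcases eq_or_ne i i₀ with rfl | hi
    · simpa [T, Matrix.mulVec, dotProduct] using abs_lt.1 hx
    · simpa [T, hi, Matrix.mulVec, Matrix.one_apply, dotProduct] using hxa i (mem_univ i)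
  have hB : volume B = ENNReal.ofReal (2 * c) := by
    simp [B, volume_pi_pi, apply_ite, two_mul]
  calc _ ≤ volume (T ⁻¹' B) := measure_mono hsub
    _ = ENNReal.ofReal |(q i₀ : ℝ)⁻¹| * ENNReal.ofReal (2 * c) := by
        rw [Measure.addHaar_preimage_linearMap volume (hdet ▸ hqi₀), hdet, hB]
    _ = _ := by
        rw [abs_inv, habs, ← ENNReal.ofReal_mul (by positivity), inv_mul_eq_div]

theorem card_qnormSphere_mul_ofReal_le (n : ℕ) (ψ : ℕ → ℝ) (k : ℕ) :
    (qnormSphere n k).card * ENNReal.ofReal (2 * ψ k / k) ≤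
      ENNReal.ofReal (4 * n * 3 ^ (n - 1) * ((k : ℝ) ^ (n - 2) * ψ k)) := by
  rcases eq_or_ne k 0 with rfl | hk
  · simp -- `2 * ψ 0 / 0 = 0`
  rcases le_or_gt (ψ k) 0 with hψ | hψ
  · rw [ENNReal.ofReal_of_nonpos (div_nonpos_of_nonpos_of_nonneg (by linarith) k.cast_nonneg),
      mul_zero]
    exact zero_le
  rw [← ENNReal.ofReal_natCast, ← ENNReal.ofReal_mul (Nat.cast_nonneg _)]
  refine ENNReal.ofReal_le_ofReal ?_
  have hk' : (1 : ℝ) ≤ k := by exact_mod_cast Nat.one_le_iff_ne_zero.2 hk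
  have hcard : ((qnormSphere n k).card : ℝ) ≤ 2 * n * 3 ^ (n - 1) * ((k : ℝ) ^ (n - 2) * k) :=
    calc ((qnormSphere n k).card : ℝ) ≤ 2 * n * (2 * k + 1) ^ (n - 1) := by
          exact_mod_cast card_qnormSphere_le hk
      _ ≤ 2 * n * (3 * k) ^ (n - 1) := by gcongr; linarith
      _ = 2 * n * 3 ^ (n - 1) * (k : ℝ) ^ (n - 1) := by ring
      _ ≤ 2 * n * 3 ^ (n - 1) * ((k : ℝ) ^ (n - 2) * k) := by
          rw [← pow_succ]; gcongr; omega
  calc ((qnormSphere n k).card : ℝ) * (2 * ψ k / k)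
      ≤ 2 * n * 3 ^ (n - 1) * ((k : ℝ) ^ (n - 2) * k) * (2 * ψ k / k) := by gcongr
    _ = _ := by field_simp; ring

theorem tsum_volume_approx_inter_unitCube_ne_top {n : ℕ} {ψ : ℕ → ℝ}
    (hconv : Summable fun k : ℕ => (k : ℝ) ^ (n - 2) * ψ k) (a : Fin n → ℝ) :
    ∑' q : Fin n → ℤ, volume.restrict (pi univ fun i => Ico (a i) (a i + 1))
      {x | q ≠ 0 ∧ |∑ i, (q i : ℝ) * x i| < ψ (qnorm q)} ≠ ∞ := by
  refine ne_top_of_le_ne_top (hconv.mul_left (4 * (n : ℝ) * 3 ^ (n - 1))).tsum_ofReal_ne_top ?_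
  calc _ ≤ ∑' q : Fin n → ℤ, ENNReal.ofReal (2 * ψ (qnorm q) / qnorm q) := by
        refine ENNReal.tsum_le_tsum fun q => ?_
        rcases eq_or_ne q 0 with rfl | hq
        · simp
        rw [Measure.restrict_apply' (MeasurableSet.univ_pi fun _ => measurableSet_Ico)]
        simpa only [hq, ne_eq, not_false_eq_true, true_and] using
          volume_slab_inter_unitCube_le hq (ψ (qnorm q)) a
    _ = ∑' k, (qnormSphere n k).card * ENNReal.ofReal (2 * ψ k / k) :=
        tsum_comp_qnorm n fun k => ENNReal.ofReal (2 * ψ k / k)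
    _ ≤ _ := ENNReal.tsum_le_tsum (card_qnormSphere_mul_ofReal_le n ψ)

theorem stmt14_general (n : ℕ) (ψ : ℕ → ℝ)
    (hconv : Summable fun k : ℕ => (k : ℝ) ^ (n - 2) * ψ k) :
    volume {x : Fin n → ℝ |
      {q : Fin n → ℤ | q ≠ 0 ∧ |∑ i, (q i : ℝ) * x i| < ψ (qnorm q)}.Infinite} = 0 := by
  have hcube : ∀ᵐ x : Fin n → ℝ, ∀ m : Fin n → ℤ,
      x ∈ (pi univ fun i => Ico (m i : ℝ) (m i + 1)) →
      {q : Fin n → ℤ | q ≠ 0 ∧ |∑ i, (q i : ℝ) * x i| < ψ (qnorm q)}.Finite :=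
    ae_all_iff.2 fun m =>
      (ae_restrict_iff' (MeasurableSet.univ_pi fun _ => measurableSet_Ico)).1
        (ae_finite_setOfPred_mem (tsum_volume_approx_inter_unitCube_ne_top hconv _))
  refine ae_iff.1 (hcube.mono fun x hx => hx (fun i => ⌊x i⌋) fun i _ => ?_)
  exact ⟨Int.floor_le _, Int.lt_floor_add_one _⟩

theorem stmt14 (n : ℕ) (hn : 2 ≤ n) (ψ : ℕ → ℝ) (hψpos : ∀ k, 0 < ψ k)
    (hψlim : Filter.Tendsto ψ Filter.atTop (nhds 0))
    (hconv : Summable fun k : ℕ => (k : ℝ) ^ (n - 2) * ψ k) :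
    volume {x : Fin n → ℝ |
      {q : Fin n → ℤ | q ≠ 0 ∧ |∑ i, (q i : ℝ) * x i| < ψ (qnorm q)}.Infinite} = 0 :=
  stmt14_general n ψ hconv
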